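/- B is signable and |(B⁻¹)_{i,j}| ≤ 1 for all i, j (i.e., D is simply invertible) if and only if Γ_D is bipartite, B_{i,j} ≤ 1 for every edge {i,j} of Γ_D (Γ_D is simple), and every prime pair (i,j) of D is simply signable. -/

import Mathlib

open Matrix

/-- A square integer matrix `M` is *signable* if there is a signing vector `s`
(valued in `{+1, -1}`) with `s i * M i j * s j = |M i j|` for all `i, j`. -/
def IsSignable {k : ℕ} (M : Matrix (Fin k) (Fin k) ℤ) : Prop :=
  ∃ s : Fin k → ℤ, (∀ i, s i = 1 ∨ s i = -1) ∧ ∀ i j, s i * M i j * s j = |M i j|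

/-- `{i, j}` is an edge of the maximal-path subgraph `Γ_D` of the digraph `D` with
adjacency matrix `B - 1`: there is an edge from `i` to `j` and no directed path
of length `≥ 2` from `i` to `j`. -/
def GammaEdge {k : ℕ} (B : Matrix (Fin k) (Fin k) ℤ) (i j : Fin k) : Prop :=
  i < j ∧ 1 ≤ B i j ∧ ∀ m : ℕ, 2 ≤ m → ((B - 1) ^ m) i j = 0

/-- The maximal-path subgraph `Γ_D` is bipartite. -/
def GammaBipartite {k : ℕ} (B : Matrix (Fin k) (Fin k) ℤ) : Prop :=
  ∃ c : Fin k → Bool, ∀ i j : Fin k, GammaEdge B i j → c i ≠ c j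

open Classical in
/-- The pairing `⟨i,j⟩`: it is `1` on the diagonal, `(-1)^ℓ(i,j)` where `ℓ(i,j)` is the
length of a longest directed path from `i` to `j` when such a path exists, and `0`
otherwise. -/
noncomputable def pairing {k : ℕ} (B : Matrix (Fin k) (Fin k) ℤ) (i j : Fin k) : ℤ :=
  if i = j then 1
  else if ∃ m : ℕ, 1 ≤ m ∧ ((B - 1) ^ m) i j ≠ 0 then
    (-1 : ℤ) ^ sSup {m : ℕ | 1 ≤ m ∧ ((B - 1) ^ m) i j ≠ 0}
  else 0

/-- `B⁽ᵛ⁾`: the matrix obtained from `B` by replacing every off-diagonal entry in row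
`v` and in column `v` by `0` (deleting the vertex `v` from the digraph). -/
def vertexDelete {k : ℕ} (B : Matrix (Fin k) (Fin k) ℤ) (v : Fin k) :
    Matrix (Fin k) (Fin k) ℤ :=
  Matrix.of fun i j => if i ≠ j ∧ (i = v ∨ j = v) then 0 else B i j

/-- `(i,j)` is a zero pair: no directed path from `i` to `j`. -/
def ZeroPair {k : ℕ} (B : Matrix (Fin k) (Fin k) ℤ) (i j : Fin k) : Prop :=
  ∀ m : ℕ, 1 ≤ m → ((B - 1) ^ m) i j = 0

/-- `(i,j)` is a unit pair: all directed paths from `i` to `j` have length one. -/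
def UnitPair {k : ℕ} (B : Matrix (Fin k) (Fin k) ℤ) (i j : Fin k) : Prop :=
  1 ≤ B i j ∧ ∀ m : ℕ, 2 ≤ m → ((B - 1) ^ m) i j = 0

/-- `(i,j)` is a composite pair: every directed path from `i` to `j` passes through
some fixed intermediate vertex `v`. -/
def CompositePair {k : ℕ} (B : Matrix (Fin k) (Fin k) ℤ) (i j : Fin k) : Prop :=
  ∃ v : Fin k, i < v ∧ v < j ∧ ∀ m : ℕ, 1 ≤ m → ((vertexDelete B v - 1) ^ m) i j = 0

/-- `(i,j)` is a prime pair: `i < j` and `(i,j)` is neither a zero pair, a unit pair,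
nor a composite pair. -/
def PrimePair {k : ℕ} (B : Matrix (Fin k) (Fin k) ℤ) (i j : Fin k) : Prop :=
  i < j ∧ ¬ZeroPair B i j ∧ ¬UnitPair B i j ∧ ¬CompositePair B i j

open Finset

/-!
Write `N = B - 1`. Since `N` is nilpotent, `B⁻¹ = ∑ₘ (-N)ᵐ`, so `(B⁻¹)ᵢⱼ` is the alternating
count of directed paths from `i` to `j`. A signing `s` with `|B⁻¹| ≤ 1` is the same thing as
`(B⁻¹)ᵢⱼ ∈ {0, sᵢsⱼ}` for all `i, j`.

On a unit pair `(B⁻¹)ᵢⱼ = -Bᵢⱼ`, so such an `s` must flip across every edge of `Γ_D`. Conversely,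
if `s` flips across every edge of `Γ_D`, then `sᵢsⱼ = (-1)^ℓ(i,j) = ⟨i,j⟩`: the first edge of a
longest path is an edge of `Γ_D`, and the rest of the path is again a longest path. Zero pairs
give `0`, and if every path from `i` to `j` passes through `v` then
`(B⁻¹)ᵢⱼ = (B⁻¹)ᵢᵥ (B⁻¹)ᵥⱼ` (compare `B⁻¹` with the inverse of `B⁽ᵛ⁾`). The sets `{0, sᵢsⱼ}`
are closed under these products, so induction on `j - i` leaves only unit and prime pairs.
-/

namespace SimplyInvertible

theorem mul_eq_abs_and_abs_le_one_iff {u x : ℤ} (hu : IsUnit u) :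
    u * x = |x| ∧ |x| ≤ 1 ↔ x = 0 ∨ x = u := by
  rcases Int.isUnit_eq_one_or hu with rfl | rfl <;>
    rcases abs_cases x with ⟨hx, hx'⟩ | ⟨hx, hx'⟩ <;> rw [hx] <;> omega

theorem mul_eq_zero_or_mul_eq_one_iff {u x : ℤ} (hu : IsUnit u) :
    u * x = 0 ∨ u * x = 1 ↔ x = 0 ∨ x = u := by
  rcases Int.isUnit_eq_one_or hu with rfl | rfl <;> omega

theorem isSignable_and_abs_le_one_iff {k : ℕ} (M : Matrix (Fin k) (Fin k) ℤ) :
    (IsSignable M ∧ ∀ i j, |M i j| ≤ 1) ↔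
      ∃ s : Fin k → ℤ, (∀ i, IsUnit (s i)) ∧ ∀ i j, M i j = 0 ∨ M i j = s i * s j := by
  constructor
  · rintro ⟨⟨s, hs, hsM⟩, hM⟩
    have hu i : IsUnit (s i) := Int.isUnit_iff.mpr (hs i)
    refine ⟨s, hu, fun i j => (mul_eq_abs_and_abs_le_one_iff ((hu i).mul (hu j))).mp
      ⟨by linear_combination hsM i j, hM i j⟩⟩
  · rintro ⟨s, hs, hsM⟩
    have h i j := (mul_eq_abs_and_abs_le_one_iff ((hs i).mul (hs j))).mpr (hsM i j)
    exact ⟨⟨s, fun i => Int.isUnit_iff.mp (hs i), fun i j => by linear_combination (h i j).1⟩,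
      fun i j => (h i j).2⟩

theorem gammaBipartite_iff_exists_sign {k : ℕ} (B : Matrix (Fin k) (Fin k) ℤ) :
    GammaBipartite B ↔
      ∃ s : Fin k → ℤ, (∀ i, IsUnit (s i)) ∧ ∀ i j, GammaEdge B i j → s i * s j = -1 := by
  constructor
  · rintro ⟨c, hc⟩
    refine ⟨fun i => if c i then 1 else -1, fun i => by dsimp only; split_ifs <;> simp,
      fun i j he => ?_⟩
    have := hc i j he
    rcases hci : c i <;> rcases hcj : c j <;> simp_all
  · rintro ⟨s, hs, hflip⟩
    refine ⟨fun i => s i = 1, fun i j he => ?_⟩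
    have := hflip i j he
    rcases Int.isUnit_eq_one_or (hs i) with h | h <;>
      rcases Int.isUnit_eq_one_or (hs j) with h' | h' <;> simp_all

section Paths

variable {R : Type*} [Semiring R] {k : ℕ} {N : Matrix (Fin k) (Fin k) R}

theorem pow_apply_eq_zero_of_lt_add (hN : ∀ i j, ¬i < j → N i j = 0) (m : ℕ) :
    ∀ i j : Fin k, (j : ℕ) < i + m → (N ^ m) i j = 0 := by
  induction m with
  | zero => exact fun i j h => one_apply_ne (by omega)
  | succ m ih =>
    intro i j h
    rw [pow_succ', mul_apply]
    refine sum_eq_zero fun l _ => ?_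
    by_cases hil : i < l
    · rw [ih l j (by omega), mul_zero]
    · rw [hN i l hil, zero_mul]

theorem pow_card_eq_zero (hN : ∀ i j, ¬i < j → N i j = 0) : N ^ k = 0 := by
  ext i j
  exact pow_apply_eq_zero_of_lt_add hN k i j (by omega)

theorem pow_add_apply_ne_zero [PartialOrder R] [IsStrictOrderedRing R]
    (hN : ∀ i j, 0 ≤ N i j) {a b : ℕ} {i l j : Fin k}
    (ha : (N ^ a) i l ≠ 0) (hb : (N ^ b) l j ≠ 0) : (N ^ (a + b)) i j ≠ 0 := by
  have hpos : 0 < (N ^ a) i l * (N ^ b) l j :=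
    mul_pos ((pow_apply_nonneg hN a i l).lt_of_ne ha.symm)
      ((pow_apply_nonneg hN b l j).lt_of_ne hb.symm)
  rw [pow_add, mul_apply]
  exact (hpos.trans_le (single_le_sum (fun l _ => mul_nonneg (pow_apply_nonneg hN a i l)
    (pow_apply_nonneg hN b l j)) (mem_univ l))).ne'

def IsLongestPath (N : Matrix (Fin k) (Fin k) R) (i j : Fin k) (L : ℕ) : Prop :=
  (N ^ L) i j ≠ 0 ∧ ∀ m, (N ^ m) i j ≠ 0 → m ≤ L

end Paths

section Unitriangular

variable {n : ℕ} {B : Matrix (Fin n) (Fin n) ℤ} (h1 : ∀ i, B i i = 1)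
  (h2 : ∀ i j : Fin n, j < i → B i j = 0) (h3 : ∀ i j : Fin n, i < j → 0 ≤ B i j)

theorem sub_one_apply_of_ne {i j : Fin n} (h : i ≠ j) : (B - 1) i j = B i j := by
  rw [Matrix.sub_apply, one_apply_ne h, sub_zero]

include h1 h2 in
theorem sub_one_apply_eq_zero_of_not_lt {i j : Fin n} (h : ¬i < j) : (B - 1) i j = 0 := by
  rcases eq_or_ne i j with rfl | hij
  · rw [Matrix.sub_apply, h1, one_apply_eq, sub_self]
  · rw [sub_one_apply_of_ne hij, h2 i j (lt_of_le_of_ne (not_lt.mp h) hij.symm)]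

include h1 h2 in
theorem pow_sub_one_apply_eq_zero_of_lt_add (m : ℕ) {i j : Fin n} (h : (j : ℕ) < i + m) :
    ((B - 1) ^ m) i j = 0 :=
  pow_apply_eq_zero_of_lt_add (fun _ _ => sub_one_apply_eq_zero_of_not_lt h1 h2) m i j h

include h1 h2 h3 in
theorem sub_one_apply_nonneg (i j : Fin n) : 0 ≤ (B - 1) i j := by
  by_cases h : i < j
  · rw [sub_one_apply_of_ne h.ne]
    exact h3 i j h
  · rw [sub_one_apply_eq_zero_of_not_lt h1 h2 h]

include h1 h2 in
theorem isUnit_det : IsUnit B.det := by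
  rw [det_of_isUpperTriangular fun i j h => h2 i j h]
  simp [h1]

include h1 h2 in
theorem inv_apply_eq_sum (i j : Fin n) :
    B⁻¹ i j = ∑ m ∈ range n, (-1) ^ m * ((B - 1) ^ m) i j := by
  have hinv : B⁻¹ = ∑ m ∈ range n, (-(B - 1)) ^ m := by
    apply inv_eq_left_inv
    have h := geom_sum_mul (-(B - 1)) n
    rwa [neg_pow, pow_card_eq_zero fun _ _ => sub_one_apply_eq_zero_of_not_lt h1 h2, mul_zero,
      zero_sub, show -(B - 1) - 1 = -B by abel, mul_neg, neg_inj] at h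
  rw [hinv, Matrix.sum_apply]
  refine sum_congr rfl fun m _ => ?_
  rw [← neg_one_smul ℤ (B - 1), smul_pow, Matrix.smul_apply, smul_eq_mul]

include h1 h2 in
theorem inv_apply_self (i : Fin n) : B⁻¹ i i = 1 := by
  rw [inv_apply_eq_sum h1 h2, sum_eq_single_of_mem 0 (mem_range.mpr i.pos)]
  · simp
  · intro m _ hm
    rw [pow_sub_one_apply_eq_zero_of_lt_add h1 h2 m (by omega), mul_zero]

include h1 h2 in
theorem inv_apply_of_lt {i j : Fin n} (h : j < i) : B⁻¹ i j = 0 := by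
  rw [inv_apply_eq_sum h1 h2]
  refine sum_eq_zero fun m _ => ?_
  rw [pow_sub_one_apply_eq_zero_of_lt_add h1 h2 m (by omega), mul_zero]

include h1 h2 in
theorem inv_apply_of_zeroPair {i j : Fin n} (hij : i ≠ j) (hz : ZeroPair B i j) :
    B⁻¹ i j = 0 := by
  rw [inv_apply_eq_sum h1 h2]
  refine sum_eq_zero fun m _ => ?_
  rcases m with _ | m
  · simp [one_apply_ne hij]
  · rw [hz (m + 1) m.succ_pos, mul_zero]

include h1 h2 in
theorem inv_apply_of_forall_pow_apply_eq_zero {i j : Fin n} (hij : i < j)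
    (h : ∀ m, 2 ≤ m → ((B - 1) ^ m) i j = 0) : B⁻¹ i j = -B i j := by
  rw [inv_apply_eq_sum h1 h2, sum_eq_single_of_mem 1 (mem_range.mpr (by omega))]
  · rw [pow_one, pow_one, sub_one_apply_of_ne hij.ne, neg_one_mul]
  · intro m _ hm
    rcases m with _ | _ | m
    · simp [one_apply_ne hij.ne]
    · exact absurd rfl hm
    · rw [h (m + 2) (by omega), mul_zero]

include h1 in
theorem vertexDelete_apply_self (v i : Fin n) : vertexDelete B v i i = 1 := by
  simp [vertexDelete, h1]

include h2 in
theorem vertexDelete_apply_of_lt (v : Fin n) {i j : Fin n} (h : j < i) :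
    vertexDelete B v i j = 0 := by
  simp [vertexDelete, h2 i j h]

include h1 h2 in
/-- In row `i ≠ v`, the correction `B⁽ᵛ⁾⁻¹ (B - B⁽ᵛ⁾)` between `B⁽ᵛ⁾⁻¹` and `B⁻¹` is supported
on column `v`, and its entry there is read off at `j = v`. -/
theorem inv_apply_eq_vertexDelete_inv_add {i v : Fin n} (hiv : i ≠ v) (j : Fin n) :
    B⁻¹ i j = (vertexDelete B v)⁻¹ i j + B⁻¹ i v * B⁻¹ v j := by
  set C := (vertexDelete B v)⁻¹
  have hC : C * vertexDelete B v = 1 := nonsing_inv_mul _ <|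
    isUnit_det (vertexDelete_apply_self h1 v) fun _ _ => vertexDelete_apply_of_lt h2 v
  have hCv : C i v = 0 := by
    have hcol : ∀ p, vertexDelete B v p v = (1 : Matrix (Fin n) (Fin n) ℤ) p v := fun p => by
      rcases eq_or_ne p v with rfl | hp
      · rw [vertexDelete_apply_self h1, one_apply_eq]
      · simp [vertexDelete, hp]
    have := congrFun (congrFun hC i) v
    rwa [mul_apply, sum_congr rfl fun p _ => by rw [hcol p], ← mul_apply, mul_one,
      one_apply_ne hiv] at this
  have hR : ∀ q ≠ v, (C * (B - vertexDelete B v)) i q = 0 := fun q hq => by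
    rw [mul_apply]
    refine sum_eq_zero fun p _ => ?_
    rcases eq_or_ne p v with rfl | hp
    · rw [hCv, zero_mul]
    · simp [vertexDelete, hp, hq]
  have hrow : ∀ j, C i j = B⁻¹ i j + (C * (B - vertexDelete B v)) i v * B⁻¹ v j := fun j => by
    have hCB : C = B⁻¹ + C * (B - vertexDelete B v) * B⁻¹ := by
      rw [mul_sub, hC, sub_mul, one_mul, mul_assoc, mul_nonsing_inv _ (isUnit_det h1 h2),
        mul_one, add_sub_cancel]
    rw [congrFun (congrFun hCB i) j, Matrix.add_apply, mul_apply,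
      sum_eq_single v (fun q _ hq => by rw [hR q hq, zero_mul]) (by simp)]
  have hv := hrow v
  rw [hCv, inv_apply_self h1 h2, mul_one] at hv
  linear_combination -hrow j + B⁻¹ v j * hv

include h1 h2 in
theorem inv_apply_of_compositePair {i j : Fin n} (hc : CompositePair B i j) :
    ∃ v, i < v ∧ v < j ∧ B⁻¹ i j = B⁻¹ i v * B⁻¹ v j := by
  obtain ⟨v, hiv, hvj, hz⟩ := hc
  have hzero : (vertexDelete B v)⁻¹ i j = 0 :=
    inv_apply_of_zeroPair (vertexDelete_apply_self h1 v) (fun _ _ => vertexDelete_apply_of_lt h2 v)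
      (hiv.trans hvj).ne hz
  exact ⟨v, hiv, hvj, by rw [inv_apply_eq_vertexDelete_inv_add h1 h2 hiv.ne, hzero, zero_add]⟩

include h1 h2 in
theorem exists_isLongestPath_pairing {i j : Fin n} (hij : i < j) (hz : ¬ZeroPair B i j) :
    ∃ L, IsLongestPath (B - 1) i j L ∧ pairing B i j = (-1) ^ L := by
  set S := {m : ℕ | 1 ≤ m ∧ ((B - 1) ^ m) i j ≠ 0}
  have hS : ∃ m, 1 ≤ m ∧ ((B - 1) ^ m) i j ≠ 0 := by simpa [ZeroPair] using hz
  have hbdd : BddAbove S := ⟨n, fun m hm => by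
    by_contra hmn
    exact hm.2 (pow_sub_one_apply_eq_zero_of_lt_add h1 h2 m (by omega))⟩
  have hL := Nat.sSup_mem hS hbdd
  refine ⟨sSup S, ⟨hL.2, fun m hm => ?_⟩, by rw [pairing, if_neg hij.ne, if_pos hS]⟩
  rcases Nat.eq_zero_or_pos m with rfl | hm1
  · exact Nat.zero_le _
  · exact le_csSup hbdd ⟨hm1, hm⟩

include h1 h2 h3 in
theorem IsLongestPath.exists_gammaEdge {i j : Fin n} {L : ℕ}
    (h : IsLongestPath (B - 1) i j (L + 1)) :
    ∃ l, GammaEdge B i l ∧ IsLongestPath (B - 1) l j L := by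
  obtain ⟨hne, hmax⟩ := h
  have hnn := sub_one_apply_nonneg h1 h2 h3
  rw [pow_succ', mul_apply] at hne
  obtain ⟨l, -, hl⟩ := exists_ne_zero_of_sum_ne_zero hne
  have hil : (B - 1) i l ≠ 0 := left_ne_zero_of_mul hl
  have hlj : ((B - 1) ^ L) l j ≠ 0 := right_ne_zero_of_mul hl
  have hil' : i < l := by
    by_contra h
    exact hil (sub_one_apply_eq_zero_of_not_lt h1 h2 h)
  refine ⟨l, ⟨hil', ?_, fun m hm => ?_⟩, hlj, fun m hm => ?_⟩
  · have := hnn i l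
    rw [sub_one_apply_of_ne hil'.ne] at hil this
    omega
  · by_contra hm'
    have := hmax _ (pow_add_apply_ne_zero hnn hm' hlj)
    omega
  · have := hmax _ (pow_add_apply_ne_zero hnn (by rwa [pow_one]) hm)
    omega

variable {s : Fin n → ℤ} (hs : ∀ i, IsUnit (s i)) (hflip : ∀ i j, GammaEdge B i j → s i * s j = -1)

include h1 h2 h3 hs hflip in
theorem IsLongestPath.mul_eq_neg_one_pow {L : ℕ} :
    ∀ {i j : Fin n}, IsLongestPath (B - 1) i j L → s i * s j = (-1) ^ L := by
  induction L with
  | zero =>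
    intro i j h
    obtain rfl : i = j := by
      by_contra hij
      exact h.1 (one_apply_ne hij)
    rw [Int.isUnit_mul_self (hs i), pow_zero]
  | succ L ih =>
    intro i j h
    obtain ⟨l, hil, hlj⟩ := h.exists_gammaEdge h1 h2 h3
    calc s i * s j = (s i * s l) * (s l * s j) := by
          linear_combination (-(s i * s j)) * Int.isUnit_mul_self (hs l)
      _ = (-1) ^ (L + 1) := by rw [hflip i l hil, ih hlj, pow_succ, mul_comm]

include h1 h2 h3 hs hflip in
theorem pairing_eq_mul {i j : Fin n} (hij : i < j) (hz : ¬ZeroPair B i j) :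
    pairing B i j = s i * s j := by
  obtain ⟨L, hL, hpair⟩ := exists_isLongestPath_pairing h1 h2 hij hz
  rw [hpair, hL.mul_eq_neg_one_pow h1 h2 h3 hs hflip]

include h1 h2 h3 hs hflip in
theorem inv_apply_eq_zero_or_eq_mul (hsimple : ∀ i j, GammaEdge B i j → B i j ≤ 1)
    (hprime : ∀ i j, PrimePair B i j →
      pairing B i j * B⁻¹ i j = 0 ∨ pairing B i j * B⁻¹ i j = 1) (i j : Fin n) :
    B⁻¹ i j = 0 ∨ B⁻¹ i j = s i * s j := by
  rcases lt_trichotomy i j with hij | rfl | hji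
  · by_cases hz : ZeroPair B i j
    · exact .inl (inv_apply_of_zeroPair h1 h2 hij.ne hz)
    by_cases hu : UnitPair B i j
    · have he : GammaEdge B i j := ⟨hij, hu⟩
      rw [inv_apply_of_forall_pow_apply_eq_zero h1 h2 hij hu.2,
        le_antisymm (hsimple i j he) hu.1, hflip i j he]
      exact .inr rfl
    by_cases hc : CompositePair B i j
    · obtain ⟨v, hiv, hvj, hv⟩ := inv_apply_of_compositePair h1 h2 hc
      rw [hv]
      rcases inv_apply_eq_zero_or_eq_mul hsimple hprime i v with h | h
      · exact .inl (by rw [h, zero_mul])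
      rcases inv_apply_eq_zero_or_eq_mul hsimple hprime v j with h' | h'
      · exact .inl (by rw [h', mul_zero])
      exact .inr (by rw [h, h']; linear_combination s i * s j * Int.isUnit_mul_self (hs v))
    rw [← mul_eq_zero_or_mul_eq_one_iff ((hs i).mul (hs j)),
      ← pairing_eq_mul h1 h2 h3 hs hflip hij hz]
    exact hprime i j ⟨hij, hz, hu, hc⟩
  · exact .inr (by rw [inv_apply_self h1 h2, Int.isUnit_mul_self (hs i)])
  · exact .inl (inv_apply_of_lt h1 h2 hji)
termination_by (j : ℕ) - i
decreasing_by all_goals omega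

include h1 h2 hs in
theorem eq_one_and_mul_eq_neg_one_of_gammaEdge
    (hsB : ∀ i j, B⁻¹ i j = 0 ∨ B⁻¹ i j = s i * s j) {i j : Fin n} (he : GammaEdge B i j) :
    B i j = 1 ∧ s i * s j = -1 := by
  have hB := he.2.1
  rcases hsB i j with h | h <;> rw [inv_apply_of_forall_pow_apply_eq_zero h1 h2 he.1 he.2.2] at h
  · omega
  · rcases Int.isUnit_iff.mp ((hs i).mul (hs j)) with hu | hu <;> rw [hu] at h ⊢ <;> omega

end Unitriangular

end SimplyInvertible

open SimplyInvertible

theorem stmt12_general {n : ℕ} (B : Matrix (Fin n) (Fin n) ℤ)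
    (h1 : ∀ i, B i i = 1) (h2 : ∀ i j : Fin n, j < i → B i j = 0)
    (h3 : ∀ i j : Fin n, i < j → 0 ≤ B i j) :
    (IsSignable B⁻¹ ∧ ∀ i j : Fin n, |B⁻¹ i j| ≤ 1) ↔
      (GammaBipartite B ∧
        (∀ i j : Fin n, GammaEdge B i j → B i j ≤ 1) ∧
        ∀ i j : Fin n, PrimePair B i j →
          pairing B i j * B⁻¹ i j = 0 ∨ pairing B i j * B⁻¹ i j = 1) := by
  rw [isSignable_and_abs_le_one_iff, gammaBipartite_iff_exists_sign]
  constructor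
  · rintro ⟨s, hs, hsB⟩
    have hedge i j (he : GammaEdge B i j) := eq_one_and_mul_eq_neg_one_of_gammaEdge h1 h2 hs hsB he
    have hflip i j (he : GammaEdge B i j) := (hedge i j he).2
    refine ⟨⟨s, hs, hflip⟩, fun i j he => (hedge i j he).1.le, fun i j hp => ?_⟩
    rw [pairing_eq_mul h1 h2 h3 hs hflip hp.1 hp.2.1,
      mul_eq_zero_or_mul_eq_one_iff ((hs i).mul (hs j))]
    exact hsB i j
  · rintro ⟨⟨s, hs, hflip⟩, hsimple, hprime⟩
    exact ⟨s, hs, inv_apply_eq_zero_or_eq_mul h1 h2 h3 hs hflip hsimple hprime⟩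

/-- `B` is signable with `|(B⁻¹) i j| ≤ 1` for all `i, j` (`D` is
simply invertible) iff `Γ_D` is bipartite and simple and every prime pair `(i,j)`
of `D` is simply signable (`⟨i,j⟩ * (B⁻¹) i j ∈ {0, 1}`). -/
theorem stmt12 {n : ℕ} (hn : 1 ≤ n) (B : Matrix (Fin n) (Fin n) ℤ)
    (h1 : ∀ i, B i i = 1) (h2 : ∀ i j : Fin n, j < i → B i j = 0)
    (h3 : ∀ i j : Fin n, i < j → 0 ≤ B i j) :
    (IsSignable B⁻¹ ∧ ∀ i j : Fin n, |B⁻¹ i j| ≤ 1) ↔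
      (GammaBipartite B ∧
        (∀ i j : Fin n, GammaEdge B i j → B i j ≤ 1) ∧
        ∀ i j : Fin n, PrimePair B i j →
          pairing B i j * B⁻¹ i j = 0 ∨ pairing B i j * B⁻¹ i j = 1) :=
  stmt12_general B h1 h2 h3
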